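/- Let Φ be a Leonard system, V an irreducible 𝒜-module, and u a nonzero vector in E_0 V. Then E*_i u ≠ 0 for 0 ≤ i ≤ d, and E*_0 u, E*_1 u, …, E*_d u is a basis of V. Moreover, a sequence of vectors v_0,…,v_d in V, not all zero, arises this way if and only if v_i ∈ E*_i V for all i and ∑_{i=0}^d v_i ∈ E_0 V. -/

import Mathlib

/-!
Since `E_0 V` is one-dimensional, `E*_i u = 0` would force `E*_i E_0 = 0`; transposing the Leonard
system, it suffices to show that `E_0` kills no nonzero `w ∈ E*_i V`. Such a `w` is an eigenvector
of `A*`, and if `E_0 w = 0`, then `E_j A* E_{j+1} ≠ 0` together with `E_k A* E_l = 0` for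
`k + 1 < l` shows inductively that `E_j w = 0` for every `j`, so `w = 0`. The nonzero vectors
`E*_i u` lie in the independent subspaces `E*_i V`, so they form a basis of the
`(d+1)`-dimensional space `V`. Conversely, `v_i = E*_i u` is recovered from `u = ∑ v_i`.
-/

open Matrix Polynomial

def IsTridiag {K : Type*} [Field K] {n : ℕ} (M : Matrix (Fin n) (Fin n) K) : Prop :=
  ∀ i j : Fin n, ((i : ℕ) + 1 < j ∨ (j : ℕ) + 1 < i) → M i j = 0

def IsIrredTridiag {K : Type*} [Field K] {n : ℕ} (M : Matrix (Fin n) (Fin n) K) : Prop :=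
  IsTridiag M ∧ ∀ i j : Fin n, ((i : ℕ) + 1 = j ∨ (j : ℕ) + 1 = i) → M i j ≠ 0

/-- Entry of a matrix with natural-number indices; `0` when out of range. -/
def mentry {K : Type*} [Field K] {n : ℕ} (M : Matrix (Fin n) (Fin n) K) (i j : ℕ) : K :=
  if h : i < n ∧ j < n then M ⟨i, h.1⟩ ⟨j, h.2⟩ else 0

/-- A family indexed by `Fin (d+1)` viewed as indexed by `ℕ`, with value `0` out of range. -/
def natIdx {d : ℕ} {M : Type*} [Zero M] (E : Fin (d+1) → M) (n : ℕ) : M :=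
  if h : n < d + 1 then E ⟨n, h⟩ else 0

/-- A Leonard system of diameter `d` in the matrix algebra `Mat_{d+1}(K)`:
`A`, `As` are multiplicity-free with eigenvalues `θ i`, `θs i` and primitive
idempotents `E i`, `Es i`, satisfying the tridiagonal conditions. -/
structure LeonardSystem (K : Type*) [Field K] (d : ℕ) where
  A : Matrix (Fin (d+1)) (Fin (d+1)) K
  As : Matrix (Fin (d+1)) (Fin (d+1)) K
  E : Fin (d+1) → Matrix (Fin (d+1)) (Fin (d+1)) K
  Es : Fin (d+1) → Matrix (Fin (d+1)) (Fin (d+1)) K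
  θ : Fin (d+1) → K
  θs : Fin (d+1) → K
  θ_inj : Function.Injective θ
  θs_inj : Function.Injective θs
  E_ne : ∀ i, E i ≠ 0
  Es_ne : ∀ i, Es i ≠ 0
  E_mul : ∀ i j, E i * E j = if i = j then E i else 0
  Es_mul : ∀ i j, Es i * Es j = if i = j then Es i else 0
  E_sum : ∑ i, E i = 1
  Es_sum : ∑ i, Es i = 1
  A_eq : A = ∑ i, θ i • E i
  As_eq : As = ∑ i, θs i • Es i
  EAsE_zero : ∀ i j : Fin (d+1), ((i:ℕ) + 1 < j ∨ (j:ℕ) + 1 < i) → E i * As * E j = 0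
  EAsE_ne : ∀ i j : Fin (d+1), ((i:ℕ) + 1 = j ∨ (j:ℕ) + 1 = i) → E i * As * E j ≠ 0
  EsAEs_zero : ∀ i j : Fin (d+1), ((i:ℕ) + 1 < j ∨ (j:ℕ) + 1 < i) → Es i * A * Es j = 0
  EsAEs_ne : ∀ i j : Fin (d+1), ((i:ℕ) + 1 = j ∨ (j:ℕ) + 1 = i) → Es i * A * Es j ≠ 0

/-- A Leonard pair in `Mat_{d+1}(K)`. -/
structure LeonardPair (K : Type*) [Field K] (d : ℕ) where
  A : Matrix (Fin (d+1)) (Fin (d+1)) K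
  As : Matrix (Fin (d+1)) (Fin (d+1)) K
  cond1 : ∃ P : Matrix (Fin (d+1)) (Fin (d+1)) K, IsUnit P ∧
    IsIrredTridiag (P⁻¹ * A * P) ∧ (P⁻¹ * As * P).IsDiag
  cond2 : ∃ P : Matrix (Fin (d+1)) (Fin (d+1)) K, IsUnit P ∧
    (P⁻¹ * A * P).IsDiag ∧ IsIrredTridiag (P⁻¹ * As * P)


theorem Matrix.exists_mulVec_ne_zero {R m n : Type*} [NonAssocSemiring R] [Fintype n]
    [DecidableEq n] {M : Matrix m n R} (hM : M ≠ 0) : ∃ x, M *ᵥ x ≠ 0 := by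
  by_contra! h
  exact hM (mulVec_injective <| by ext1 x; simp [h])

theorem IsIdempotentElem.mulVec_mulVec_self {R n : Type*} [NonUnitalSemiring R] [Fintype n]
    {M : Matrix n n R} (hM : IsIdempotentElem M) (x : n → R) : M *ᵥ (M *ᵥ x) = M *ᵥ x := by
  rw [mulVec_mulVec, hM.eq]

section OrthogonalIdempotents

variable {K n ι : Type*} [Field K] [Fintype n] [DecidableEq n]
  {E : ι → Matrix n n K}

theorem OrthogonalIdempotents.mulVec_eq_ite [DecidableEq ι] (hE : OrthogonalIdempotents E)
    {i : ι} {v : n → K} (hv : E i *ᵥ v = v) (j : ι) : E j *ᵥ v = if j = i then v else 0 := by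
  nth_rw 1 [← hv]
  rw [mulVec_mulVec, hE.mul_eq]
  split_ifs with hji
  · subst hji; exact hv
  · exact zero_mulVec _

theorem OrthogonalIdempotents.mulVec_sum_eq [Fintype ι] [DecidableEq ι]
    (hE : OrthogonalIdempotents E) {v : ι → n → K} (hv : ∀ i, E i *ᵥ v i = v i) (i : ι) : E i *ᵥ ∑ j, v j = v i := by
  simp [mulVec_sum, hE.mulVec_eq_ite (hv _)]

theorem OrthogonalIdempotents.sum_smul_mulVec_eq [Fintype ι] [DecidableEq ι]
    (hE : OrthogonalIdempotents E) (θ : ι → K) {i : ι} {v : n → K} (hv : E i *ᵥ v = v) :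
    (∑ j, θ j • E j) *ᵥ v = θ i • v := by
  simp [sum_mulVec, smul_mulVec, hE.mulVec_eq_ite hv]

theorem CompleteOrthogonalIdempotents.sum_mulVec_eq [Fintype ι]
    (hE : CompleteOrthogonalIdempotents E) (v : n → K) : ∑ i, E i *ᵥ v = v := by
  rw [← sum_mulVec, hE.complete, one_mulVec]

theorem OrthogonalIdempotents.linearIndependent_of_mulVec_eq [DecidableEq ι]
    (hE : OrthogonalIdempotents E) {v : ι → n → K} (hv : ∀ i, E i *ᵥ v i = v i) (hv0 : ∀ i, v i ≠ 0) :
    LinearIndependent K v := by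
  rw [linearIndependent_iff']
  intro s g hg i hi
  have hEi : E i *ᵥ ∑ j ∈ s, g j • v j = g i • v i := by
    simp [mulVec_sum, mulVec_smul, hE.mulVec_eq_ite (hv _), hi]
  rw [hg, mulVec_zero] at hEi
  exact (smul_eq_zero.mp hEi.symm).resolve_right (hv0 i)

/-- Each `E i` has rank one: nonzero vectors `w i ∈ E i V` are independent, hence a basis. -/
theorem OrthogonalIdempotents.exists_mulVec_eq_smul [Fintype ι] [DecidableEq ι]
    (hE : OrthogonalIdempotents E) (hne : ∀ i, E i ≠ 0) (hcard : Fintype.card ι = Fintype.card n) :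
    ∃ w : ι → n → K, ∀ i y, ∃ c : K, E i *ᵥ y = c • w i := by
  choose x hx using fun i ↦ exists_mulVec_ne_zero (hne i)
  have hw i := (hE.idem i).mulVec_mulVec_self (x i)
  let b := basisOfLinearIndependentOfCardEqFinrank' _
    (hE.linearIndependent_of_mulVec_eq hw hx) (by simpa using hcard)
  refine ⟨fun i ↦ E i *ᵥ x i, fun i y ↦ ⟨b.repr y i, ?_⟩⟩
  conv_lhs => rw [← b.sum_repr y]
  simp [b, mulVec_sum, mulVec_smul, hE.mulVec_eq_ite (hw _)]

theorem OrthogonalIdempotents.mul_eq_zero_of_mulVec_eq_zero [Fintype ι] [DecidableEq ι]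
    (hE : OrthogonalIdempotents E) (hne : ∀ i, E i ≠ 0)
    (hcard : Fintype.card ι = Fintype.card n) {M : Matrix n n K} {i : ι} {x : n → K}
    (hx : E i *ᵥ x ≠ 0) (hM : M *ᵥ (E i *ᵥ x) = 0) : M * E i = 0 := by
  obtain ⟨w, hw⟩ := hE.exists_mulVec_eq_smul hne hcard
  obtain ⟨a, ha⟩ := hw i x
  have hMw : M *ᵥ w i = 0 := by
    rw [ha, mulVec_smul] at hM
    exact (smul_eq_zero.mp hM).resolve_left (by rintro rfl; simp [ha] at hx)
  refine mulVec_injective ?_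
  ext1 y
  obtain ⟨c, hc⟩ := hw i y
  rw [zero_mulVec, ← mulVec_mulVec, hc, mulVec_smul, hMw, smul_zero]

end OrthogonalIdempotents

namespace LeonardSystem

variable {K : Type*} [Field K] {d : ℕ} (L : LeonardSystem K d)

theorem completeOrthogonalIdempotents_E : CompleteOrthogonalIdempotents L.E :=
  ⟨OrthogonalIdempotents.iff_mul_eq.mpr L.E_mul, L.E_sum⟩

theorem completeOrthogonalIdempotents_Es : CompleteOrthogonalIdempotents L.Es :=
  ⟨OrthogonalIdempotents.iff_mul_eq.mpr L.Es_mul, L.Es_sum⟩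

def transpose : LeonardSystem K d where
  A := L.Aᵀ
  As := L.Asᵀ
  E i := (L.E i)ᵀ
  Es i := (L.Es i)ᵀ
  θ := L.θ
  θs := L.θs
  θ_inj := L.θ_inj
  θs_inj := L.θs_inj
  E_ne i := by simpa using L.E_ne i
  Es_ne i := by simpa using L.Es_ne i
  E_mul i j := by rw [← transpose_mul, L.E_mul j i]; split_ifs <;> simp_all
  Es_mul i j := by rw [← transpose_mul, L.Es_mul j i]; split_ifs <;> simp_all
  E_sum := by rw [← transpose_sum, L.E_sum, transpose_one]
  Es_sum := by rw [← transpose_sum, L.Es_sum, transpose_one]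
  A_eq := by simp [L.A_eq, transpose_sum]
  As_eq := by simp [L.As_eq, transpose_sum]
  EAsE_zero i j h := by
    rw [← transpose_mul, ← transpose_mul, ← mul_assoc, L.EAsE_zero j i h.symm, transpose_zero]
  EAsE_ne i j h := by
    rw [← transpose_mul, ← transpose_mul, ← mul_assoc, Ne, transpose_eq_zero]
    exact L.EAsE_ne j i h.symm
  EsAEs_zero i j h := by
    rw [← transpose_mul, ← transpose_mul, ← mul_assoc, L.EsAEs_zero j i h.symm, transpose_zero]
  EsAEs_ne i j h := by
    rw [← transpose_mul, ← transpose_mul, ← mul_assoc, Ne, transpose_eq_zero]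
    exact L.EsAEs_ne j i h.symm

/-- `0 = E_j A* w = E_j A* E_{j+1} w`, while `E_j A* E_{j+1} ≠ 0` and `E_{j+1}` has rank one. -/
theorem E_succ_mulVec_eq_zero {θ : K} {w : Fin (d+1) → K} (hw : L.As *ᵥ w = θ • w)
    (j : Fin d) (hlow : ∀ k ≤ j.castSucc, L.E k *ᵥ w = 0) : L.E j.succ *ᵥ w = 0 := by
  have hE := L.completeOrthogonalIdempotents_E
  have key : (L.E j.castSucc * L.As) *ᵥ (L.E j.succ *ᵥ w) = 0 := by
    calc (L.E j.castSucc * L.As) *ᵥ (L.E j.succ *ᵥ w)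
        = ∑ k, (L.E j.castSucc * L.As) *ᵥ (L.E k *ᵥ w) := by
          rw [Finset.sum_eq_single j.succ _ (by simp)]
          intro k _ hk
          by_cases hkj : k ≤ j.castSucc
          · rw [hlow k hkj, mulVec_zero]
          · have hlt : (j.castSucc : ℕ) + 1 < k := by
              simp only [ne_eq, Fin.ext_iff, Fin.le_def, Fin.val_castSucc, Fin.val_succ,
                not_le] at hkj hk ⊢
              omega
            rw [mulVec_mulVec, L.EAsE_zero _ _ (Or.inl hlt), zero_mulVec]
      _ = L.E j.castSucc *ᵥ (L.As *ᵥ w) := by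
          rw [← mulVec_sum, hE.sum_mulVec_eq, mulVec_mulVec]
      _ = 0 := by rw [hw, mulVec_smul, hlow _ le_rfl, smul_zero]
  by_contra h
  exact L.EAsE_ne j.castSucc j.succ (Or.inl (by simp))
    (hE.mul_eq_zero_of_mulVec_eq_zero L.E_ne rfl h key)

theorem E_zero_mulVec_ne_zero {i : Fin (d+1)} {w : Fin (d+1) → K} (hw : L.Es i *ᵥ w = w)
    (hw0 : w ≠ 0) : L.E 0 *ᵥ w ≠ 0 := by
  intro h0
  have hA : L.As *ᵥ w = L.θs i • w := by
    rw [L.As_eq]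
    exact L.completeOrthogonalIdempotents_Es.sum_smul_mulVec_eq L.θs hw
  have hall : ∀ m : Fin (d+1), ∀ k ≤ m, L.E k *ᵥ w = 0 := by
    intro m
    induction m using Fin.induction with
    | zero => intro k hk; rwa [Fin.le_zero_iff.mp hk]
    | succ j ih =>
      intro k hk
      rcases hk.lt_or_eq with hlt | rfl
      · exact ih k (Fin.le_castSucc_iff.mpr hlt)
      · exact L.E_succ_mulVec_eq_zero hA j ih
  apply hw0
  rw [← L.completeOrthogonalIdempotents_E.sum_mulVec_eq w]
  exact Finset.sum_eq_zero fun k _ ↦ hall (Fin.last d) k (Fin.le_last k)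

theorem E_zero_mul_Es_ne_zero (i : Fin (d+1)) : L.E 0 * L.Es i ≠ 0 := by
  obtain ⟨x, hx⟩ := exists_mulVec_ne_zero (L.Es_ne i)
  intro h
  exact L.E_zero_mulVec_ne_zero ((L.completeOrthogonalIdempotents_Es.idem i).mulVec_mulVec_self x)
    hx (by rw [mulVec_mulVec, h, zero_mulVec])

theorem Es_mul_E_zero_ne_zero (i : Fin (d+1)) : L.Es i * L.E 0 ≠ 0 := by
  rw [Ne, ← transpose_eq_zero, transpose_mul]
  exact L.transpose.E_zero_mul_Es_ne_zero i

theorem Es_mulVec_ne_zero {u : Fin (d+1) → K} (hu : L.E 0 *ᵥ u = u) (hu0 : u ≠ 0)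
    (i : Fin (d+1)) : L.Es i *ᵥ u ≠ 0 := by
  intro h
  exact L.Es_mul_E_zero_ne_zero i <|
    L.completeOrthogonalIdempotents_E.mul_eq_zero_of_mulVec_eq_zero L.E_ne rfl (x := u)
      (by rwa [hu]) (by rwa [hu])

end LeonardSystem

theorem stmt14 {K : Type*} [Field K] {d : ℕ} (L : LeonardSystem K d)
    (u : Fin (d+1) → K) (hu : L.E 0 *ᵥ u = u) (hu0 : u ≠ 0) :
    (∀ i : Fin (d+1), L.Es i *ᵥ u ≠ 0) ∧
    LinearIndependent K (fun i : Fin (d+1) => L.Es i *ᵥ u) ∧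
    Submodule.span K (Set.range (fun i : Fin (d+1) => L.Es i *ᵥ u)) = ⊤ ∧
    (∀ v : Fin (d+1) → (Fin (d+1) → K), (∃ i, v i ≠ 0) →
      ((∃ u' : Fin (d+1) → K, L.E 0 *ᵥ u' = u' ∧ u' ≠ 0 ∧ ∀ i, v i = L.Es i *ᵥ u') ↔
        ((∀ i, L.Es i *ᵥ (v i) = v i) ∧ L.E 0 *ᵥ (∑ i, v i) = ∑ i, v i))) := by
  have hEs := L.completeOrthogonalIdempotents_Es
  have hidem i := (hEs.idem i).mulVec_mulVec_self
  have hne := L.Es_mulVec_ne_zero hu hu0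
  have hli := hEs.linearIndependent_of_mulVec_eq (fun i ↦ hidem i u) hne
  refine ⟨hne, hli, hli.span_eq_top_of_card_eq_finrank' (by simp), fun v ⟨i, hi⟩ ↦ ⟨?_, ?_⟩⟩
  · rintro ⟨u', hu', -, hv⟩
    simp only [hv, hidem, hEs.sum_mulVec_eq, hu', implies_true, and_self]
  · rintro ⟨hv, hsum⟩
    have hcomp := hEs.mulVec_sum_eq hv
    refine ⟨∑ j, v j, hsum, fun h0 ↦ hi ?_, fun j ↦ (hcomp j).symm⟩
    rw [← hcomp i, h0, mulVec_zero]
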